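/- Let X be a set, let u, v : X → ℝ with v ≤ 0, and let F be a family of functions X → ℝ∪{−∞} with u ∈ F such that w + c·v ∈ F whenever w ∈ F and c ≥ 0. For t ≤ 0 define P_t = sup{w ∈ F : w ≤ u + t·v} (pointwise supremum). Then for s < t < 0 we have u + s·v ≥ u + t·v, hence P_s ≥ P_t; moreover P_s + (t−s)·v ≤ P_t, so |P_t − P_s| ≤ (t−s)·(−v) pointwise. -/
import Mathlib


theorem stmt6 {X : Type*} (F : Set (X → ℝ)) (u v : X → ℝ)
    (hv : ∀ x, v x ≤ 0) (hu : u ∈ F)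
    (hF : ∀ w ∈ F, ∀ c : ℝ, 0 ≤ c → (fun x => w x + c * v x) ∈ F)
    (P : ℝ → X → ℝ)
    (hP : ∀ t : ℝ, ∀ x, P t x =
      sSup {y : ℝ | ∃ w ∈ F, (∀ x', w x' ≤ u x' + t * v x') ∧ y = w x}) :
    ∀ s t : ℝ, s < t → t < 0 → ∀ x,
      P t x ≤ P s x ∧ P s x + (t - s) * v x ≤ P t x ∧
        |P t x - P s x| ≤ (t - s) * (-(v x)) := by
  intro s t hst ht0 x
  set St := {y : ℝ | ∃ w ∈ F, (∀ x', w x' ≤ u x' + t * v x') ∧ y = w x}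
  set Ss := {y : ℝ | ∃ w ∈ F, (∀ x', w x' ≤ u x' + s * v x') ∧ y = w x}
  have hs0 : s < 0 := hst.trans ht0
  -- u is a valid witness for any r < 0
  have huw : ∀ r : ℝ, r ≤ 0 → ∀ x', u x' ≤ u x' + r * v x' := by
    intro r hr x'
    nlinarith [hv x']
  have hne_t : St.Nonempty := ⟨u x, u, hu, huw t ht0.le, rfl⟩
  have hne_s : Ss.Nonempty := ⟨u x, u, hu, huw s hs0.le, rfl⟩
  have hbdd : ∀ r : ℝ, BddAbove {y : ℝ | ∃ w ∈ F, (∀ x', w x' ≤ u x' + r * v x') ∧ y = w x} := by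
    intro r
    refine ⟨u x + r * v x, ?_⟩
    rintro y ⟨w, hw, hle, rfl⟩
    exact hle x
  -- inclusion St ⊆ Ss
  have hsub : St ⊆ Ss := by
    rintro y ⟨w, hw, hle, rfl⟩
    refine ⟨w, hw, fun x' => (hle x').trans ?_, rfl⟩
    nlinarith [hv x']
  have h1 : P t x ≤ P s x := by
    rw [hP t x, hP s x]
    exact csSup_le_csSup (hbdd s) hne_t hsub
  have h2 : P s x + (t - s) * v x ≤ P t x := by
    rw [hP t x, hP s x]
    rw [← sub_nonneg]
    have : sSup Ss ≤ sSup St - (t - s) * v x := by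
      apply csSup_le hne_s
      rintro y ⟨w, hw, hle, rfl⟩
      have hmem : (fun x' => w x' + (t - s) * v x') ∈ F := hF w hw _ (by linarith)
      have hle' : ∀ x', w x' + (t - s) * v x' ≤ u x' + t * v x' := by
        intro x'
        have := hle x'
        nlinarith
      have : w x + (t - s) * v x ≤ sSup St :=
        le_csSup (hbdd t) ⟨_, hmem, hle', rfl⟩
      linarith
    linarith
  refine ⟨h1, h2, ?_⟩
  rw [abs_sub_comm, abs_of_nonneg (by linarith)]
  nlinarith
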